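/- arXiv:2504.19874 — 2 statements merged into one kernel-verified Lean document; each statement's English description precedes it below -/
import Mathlib

section
/- Let d ≥ 1, let s be a random vector in ℝ^d with i.i.d. standard normal N(0,1) coordinates, let x ∈ ℝ^d be a unit vector (‖x‖₂ = 1), and let y ∈ ℝ^d be arbitrary. Then E[⟨s, y⟩ · sign(⟨s, x⟩)] = √(2/π) · ⟨x, y⟩. -/
/-!
Move to the standard Gaussian measure on `EuclideanSpace ℝ (Fin d)` and split
`y = ⟪x, y⟫ • x + z` with `z ⟂ x`. Since `⟪s, x⟫ ~ N(0, 1)`, the first part contributes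
`⟪x, y⟫ · E|N(0, 1)| = √(2/π) · ⟪x, y⟫`. The reflection in the hyperplane `zᗮ` preserves the
standard Gaussian, fixes `⟪s, x⟫` and negates `⟪s, z⟫`, so the second part has mean zero.
-/

open MeasureTheory ProbabilityTheory Real
open scoped RealInnerProductSpace

lemma integral_mul_exp_neg_sq_div_two_Ioi :
    ∫ t in Set.Ioi (0 : ℝ), t * exp (-(t ^ 2) / 2) = 1 := by
  have hderiv : ∀ t ∈ Set.Ici (0 : ℝ),
      HasDerivAt (fun u ↦ -exp (-(u ^ 2) / 2)) (t * exp (-(t ^ 2) / 2)) t := fun t _ ↦ by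
    have hquad : HasDerivAt (fun u : ℝ ↦ -(u ^ 2) / 2) (-t) t :=
      ((hasDerivAt_pow 2 t).neg.div_const 2).congr_deriv (by push_cast; ring)
    exact hquad.exp.neg.congr_deriv (by ring)
  have hint : IntegrableOn (fun t : ℝ ↦ t * exp (-(t ^ 2) / 2)) (Set.Ioi 0) := by
    refine ((integrable_mul_exp_neg_mul_sq (b := 1 / 2) (by norm_num)).congr
      (ae_of_all _ fun t ↦ ?_)).integrableOn
    show t * exp (-(1 / 2) * t ^ 2) = t * exp (-(t ^ 2) / 2)
    ring_nf
  have hlim : Filter.Tendsto (fun u : ℝ ↦ -exp (-(u ^ 2) / 2)) Filter.atTop (nhds 0) := by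
    rw [← neg_zero]
    refine (tendsto_exp_atBot.comp ?_).neg
    exact (Filter.tendsto_neg_atBot_iff.2 (Filter.tendsto_pow_atTop two_ne_zero)).atBot_div_const
      two_pos
  simpa using integral_Ioi_of_hasDerivAt_of_tendsto' hderiv hint hlim

namespace ProbabilityTheory

lemma integral_abs_gaussianReal : ∫ t, |t| ∂gaussianReal 0 1 = √(2 / π) := by
  have hpdf : ∀ t, gaussianPDFReal 0 1 t * |t| = (√(2 * π))⁻¹ * (|t| * exp (-(|t| ^ 2) / 2)) :=
    fun t ↦ by simp only [gaussianPDFReal, NNReal.coe_one, mul_one, sub_zero, sq_abs]; ring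
  simp_rw [integral_gaussianReal_eq_integral_smul one_ne_zero, smul_eq_mul, hpdf]
  rw [integral_comp_abs (f := fun u ↦ (√(2 * π))⁻¹ * (u * exp (-(u ^ 2) / 2))),
    integral_const_mul, integral_mul_exp_neg_sq_div_two_Ioi]
  have hroot : √(2 / π) * √(2 * π) = 2 := by
    rw [← sqrt_mul (by positivity), show 2 / π * (2 * π) = 2 ^ 2 by field_simp,
      sqrt_sq zero_le_two]
  rw [mul_one, ← div_eq_mul_inv, div_eq_iff (by positivity), hroot]

section stdGaussian

variable {E : Type*} [NormedAddCommGroup E] [InnerProductSpace ℝ E] [FiniteDimensional ℝ E]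
  [MeasurableSpace E] [BorelSpace E]

lemma stdGaussian_map_inner_right {x : E} (hx : ‖x‖ = 1) :
    (stdGaussian E).map (fun s ↦ ⟪s, x⟫) = gaussianReal 0 1 := by
  have h := IsGaussian.map_eq_gaussianReal (μ := stdGaussian E) (innerSL ℝ x)
  simp only [integral_strongDual_stdGaussian, variance_dual_stdGaussian, innerSL_apply_norm,
    hx] at h
  convert h using 2
  · ext s; simp [real_inner_comm]
  · simp

lemma integrable_inner_mul_comp_inner {g : ℝ → ℝ} (hg : Measurable g) {C : ℝ}
    (hgC : ∀ t, |g t| ≤ C) (x v : E) :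
    Integrable (fun s ↦ ⟪s, v⟫ * g ⟪s, x⟫) (stdGaussian E) := by
  have hv : Integrable (fun s ↦ ⟪s, v⟫) (stdGaussian E) := by
    simpa [real_inner_comm] using
      (innerSL ℝ v).integrable_comp (IsGaussian.integrable_id (μ := stdGaussian E))
  simpa [mul_comm] using hv.bdd_mul (hg.comp (by fun_prop)).aestronglyMeasurable
    (ae_of_all _ fun s ↦ hgC ⟪s, x⟫)

lemma integral_inner_mul_comp_inner_of_inner_eq_zero (g : ℝ → ℝ) {x z : E} (hxz : ⟪x, z⟫ = 0) :
    ∫ s, ⟪s, z⟫ * g ⟪s, x⟫ ∂stdGaussian E = 0 := by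
  set R := (ℝ ∙ z)ᗮ.reflection
  have hRz : R z = -z := Submodule.reflection_orthogonalComplement_singleton_eq_neg z
  have hRx : R x = x := Submodule.reflection_mem_subspace_eq_self
    (Submodule.mem_orthogonal_singleton_iff_inner_right.2 (by rwa [real_inner_comm]))
  have hflip : ∀ s, ⟪R s, z⟫ * g ⟪R s, x⟫ = -(⟪s, z⟫ * g ⟪s, x⟫) := fun s ↦ by
    have hz := R.inner_map_map s z
    have hx := R.inner_map_map s x
    rw [hRz, inner_neg_right] at hz
    rw [hRx] at hx
    rw [hx, ← neg_neg ⟪R s, z⟫, hz, neg_mul]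
  have h := integral_map_equiv R.toMeasurableEquiv (μ := stdGaussian E)
    (fun s ↦ ⟪s, z⟫ * g ⟪s, x⟫)
  rw [LinearIsometryEquiv.coe_toMeasurableEquiv, stdGaussian_map] at h
  simp only [hflip, integral_neg] at h
  linarith

lemma integral_inner_mul_comp_inner_stdGaussian {g : ℝ → ℝ} (hg : Measurable g) {C : ℝ}
    (hgC : ∀ t, |g t| ≤ C) {x : E} (hx : ‖x‖ = 1) (y : E) :
    ∫ s, ⟪s, y⟫ * g ⟪s, x⟫ ∂stdGaussian E = ⟪x, y⟫ * ∫ t, t * g t ∂gaussianReal 0 1 := by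
  set z := y - ⟪x, y⟫ • x
  have hxz : ⟪x, z⟫ = 0 := by simp [z, inner_sub_right, real_inner_smul_right, hx]
  have hsplit : ∀ s, ⟪s, y⟫ * g ⟪s, x⟫ = ⟪x, y⟫ * (⟪s, x⟫ * g ⟪s, x⟫) + ⟪s, z⟫ * g ⟪s, x⟫ :=
    fun s ↦ by simp only [z, inner_sub_right, real_inner_smul_right]; ring
  have hlaw : ∫ s, ⟪s, x⟫ * g ⟪s, x⟫ ∂stdGaussian E = ∫ t, t * g t ∂gaussianReal 0 1 := by
    rw [← stdGaussian_map_inner_right hx,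
      integral_map (φ := fun s ↦ ⟪s, x⟫) (f := fun t ↦ t * g t) (by fun_prop)
        (measurable_id.mul hg).aestronglyMeasurable]
  simp_rw [hsplit]
  rw [integral_add ((integrable_inner_mul_comp_inner hg hgC x x).const_mul _)
      (integrable_inner_mul_comp_inner hg hgC x z), integral_const_mul, hlaw,
    integral_inner_mul_comp_inner_of_inner_eq_zero g hxz, add_zero]

end stdGaussian

end ProbabilityTheory

theorem statement_4_general (d : ℕ) (x y : Fin d → ℝ)
    (hx : ∑ i, x i ^ 2 = 1) :
    (∫ s, (∑ i, s i * y i) * (if 0 ≤ ∑ i, s i * x i then (1 : ℝ) else -1)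
        ∂(Measure.pi fun _ : Fin d => gaussianReal 0 1))
      = Real.sqrt (2 / π) * ∑ i, x i * y i := by
  set sgn : ℝ → ℝ := fun t ↦ if 0 ≤ t then 1 else -1
  have hsgn_meas : Measurable sgn :=
    Measurable.ite measurableSet_Ici measurable_const measurable_const
  have hsgn_le : ∀ t, |sgn t| ≤ 1 := fun t ↦ by by_cases ht : 0 ≤ t <;> simp [sgn, ht]
  have hmul_sgn : ∀ t, t * sgn t = |t| := fun t ↦ by
    by_cases ht : 0 ≤ t
    · simp [sgn, ht, abs_of_nonneg ht]
    · simp [sgn, ht, abs_of_neg (not_le.1 ht)]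
  have hinner : ∀ a b : Fin d → ℝ, ∑ i, a i * b i = ⟪WithLp.toLp 2 a, WithLp.toLp 2 b⟫ :=
    fun a b ↦ by simp [PiLp.inner_apply, mul_comm]
  have hx' : ‖WithLp.toLp 2 x‖ = 1 := by simp [EuclideanSpace.norm_eq, hx]
  set F : EuclideanSpace ℝ (Fin d) → ℝ :=
    fun u ↦ ⟪u, WithLp.toLp 2 y⟫ * sgn ⟪u, WithLp.toLp 2 x⟫
  calc _ = ∫ s, F (WithLp.toLp 2 s) ∂(Measure.pi fun _ : Fin d => gaussianReal 0 1) := by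
        simp only [F, hinner, sgn]
    _ = ∫ u, F u ∂stdGaussian (EuclideanSpace ℝ (Fin d)) := by
      rw [← map_pi_eq_stdGaussian (ι := Fin d)]
      exact (integral_map_equiv (MeasurableEquiv.toLp 2 (Fin d → ℝ)) F).symm
    _ = _ := by
      rw [integral_inner_mul_comp_inner_stdGaussian hsgn_meas hsgn_le hx',
        integral_congr_ae (ae_of_all _ hmul_sgn), integral_abs_gaussianReal, ← hinner, mul_comm]

/-- Let `d ≥ 1`, let `s` be a random vector in `ℝ^d` with i.i.d. standard
normal `N(0,1)` coordinates, let `x ∈ ℝ^d` be a unit vector and `y ∈ ℝ^d` arbitrary.  Then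
`E[⟨s, y⟩ · sign(⟨s, x⟩)] = √(2/π) · ⟨x, y⟩`, where `sign(t) = 1` if `t ≥ 0` and `-1`
otherwise. -/
theorem statement_4 (d : ℕ) (hd : 1 ≤ d) (x y : Fin d → ℝ)
    (hx : ∑ i, x i ^ 2 = 1) :
    (∫ s, (∑ i, s i * y i) * (if 0 ≤ ∑ i, s i * x i then (1 : ℝ) else -1)
        ∂(Measure.pi fun _ : Fin d => gaussianReal 0 1))
      = Real.sqrt (2 / π) * ∑ i, x i * y i :=
  statement_4_general d x y hx
end

section
/- Let d ≥ 2, let u be a random vector distributed according to the uniform probability measure σ_d on the unit sphere S^{d−1} ⊂ ℝ^d, let x ∈ ℝ^d be a unit vector (‖x‖₂ = 1), and let y ∈ ℝ^d be arbitrary. Then E[⟨u, y⟩ · sign(⟨u, x⟩)] = E[|u_1|] · ⟨x, y⟩, where u_1 denotes the first coordinate of u. Consequently, for the 1-bit quantizer with reconstruction x̃ = √(2/(π d)) · Πᵀ · sign(Π x) (Π Haar-random orthogonal), the inner-product estimator ⟨y, x̃⟩ has expectation √(2/(π d)) · d · E[|u_1|] · ⟨x, y⟩, which is a multiplicatively biased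 estimate of ⟨x, y⟩. -/
/-!
Write `y = ⟨x, y⟩ x + z` with `z ⊥ x`. The Householder reflection in `z` preserves `σ`, fixes `x`
and negates `z`, so the `z`-part of `E[⟨u, y⟩ sign⟨u, x⟩]` vanishes, leaving `⟨x, y⟩ E|⟨u, x⟩|`;
a reflection carrying `x` to `e₀` turns `E|⟨u, x⟩|` into `E|u₀|`.

For the quantizer, `⟨y, Πᵀ sign(Π x)⟩ = ∑ᵢ ⟨Πᵢ, y⟩ sign⟨Πᵢ, x⟩` over the rows `Πᵢ = Πᵀ eᵢ`, and
each row is `σ`-distributed. Indeed, take `w ~ σ` independent of `Π` and compute the law of `Πᵀ w`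
by Fubini in both orders: conditionally on `Π` it is `σ`, since `Πᵀ` is orthogonal; conditionally on
`w` it is the law of `Πᵀ eᵢ`, since `Πᵀ w = (V Π)ᵀ eᵢ` for a reflection `V` with `V eᵢ = w`, and
`V Π` has the law of `Π`.
-/

open MeasureTheory Matrix Real

/-- Matrices carry the product (Borel) σ-algebra. -/
instance matrixMeasurableSpace {d : ℕ} : MeasurableSpace (Matrix (Fin d) (Fin d) ℝ) :=
  MeasurableSpace.pi

instance matrixBorelSpace {d : ℕ} : BorelSpace (Matrix (Fin d) (Fin d) ℝ) :=
  inferInstanceAs (BorelSpace (Fin d → Fin d → ℝ))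

namespace Matrix

theorem mulVec_dotProduct {m n α : Type*} [Fintype m] [Fintype n] [CommSemiring α]
    (A : Matrix m n α) (u : n → α) (v : m → α) : (A *ᵥ u) ⬝ᵥ v = u ⬝ᵥ (Aᵀ *ᵥ v) := by
  rw [dotProduct_comm, dotProduct_transpose_mulVec]

variable {n K : Type*} [Fintype n] [DecidableEq n] [Field K]

def householder (w : n → K) : Matrix n n K :=
  1 - (2 / (w ⬝ᵥ w)) • vecMulVec w w

theorem householder_transpose (w : n → K) : (householder w)ᵀ = householder w := by
  simp [householder, transpose_vecMulVec]

theorem householder_mulVec (w v : n → K) :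
    householder w *ᵥ v = v - (2 * (w ⬝ᵥ v) / (w ⬝ᵥ w)) • w := by
  rw [householder, sub_mulVec, one_mulVec, smul_mulVec, vecMulVec_mulVec, op_smul_eq_smul,
    smul_smul, div_mul_eq_mul_div]

theorem dotProduct_householder_mulVec {w : n → K} (hw : w ⬝ᵥ w ≠ 0) (v : n → K) :
    w ⬝ᵥ (householder w *ᵥ v) = -(w ⬝ᵥ v) := by
  rw [householder_mulVec, dotProduct_sub, dotProduct_smul, smul_eq_mul, div_mul_cancel₀ _ hw]
  ring

theorem householder_mul_self {w : n → K} (hw : w ⬝ᵥ w ≠ 0) :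
    householder w * householder w = 1 := by
  refine ext_iff_mulVec.mpr fun v => ?_
  rw [← mulVec_mulVec, householder_mulVec w (householder w *ᵥ v),
    dotProduct_householder_mulVec hw, householder_mulVec, one_mulVec, mul_neg, neg_div,
    neg_smul, sub_neg_eq_add, sub_add_cancel]

theorem householder_mulVec_self {w : n → K} (hw : w ⬝ᵥ w ≠ 0) :
    householder w *ᵥ w = -w := by
  rw [householder_mulVec, mul_div_assoc, div_self hw, mul_one, two_smul]
  abel

theorem householder_mulVec_of_dotProduct_eq_zero {w v : n → K} (h : w ⬝ᵥ v = 0) :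
    householder w *ᵥ v = v := by
  simp [householder_mulVec, h]

theorem householder_sub_mulVec {u v : n → K} (huv : u ⬝ᵥ u = v ⬝ᵥ v)
    (h : (u - v) ⬝ᵥ (u - v) ≠ 0) : householder (u - v) *ᵥ u = v := by
  have : 2 * ((u - v) ⬝ᵥ u) = (u - v) ⬝ᵥ (u - v) := by
    simp only [sub_dotProduct, dotProduct_sub, dotProduct_comm v u, huv]
    ring
  rw [householder_mulVec, this, div_self h, one_smul, sub_sub_cancel]

end Matrix

theorem exists_symm_orthogonal_mulVec_eq {n : Type*} [Fintype n] [DecidableEq n] {u v : n → ℝ}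
    (hu : u ⬝ᵥ u = 1) (hv : v ⬝ᵥ v = 1) :
    ∃ V : Matrix n n ℝ, Vᵀ = V ∧ Vᵀ * V = 1 ∧ V *ᵥ u = v := by
  rcases eq_or_ne u v with rfl | huv
  · exact ⟨1, by simp, by simp, by simp⟩
  have h : (u - v) ⬝ᵥ (u - v) ≠ 0 := by
    rwa [Ne, dotProduct_self_eq_zero, sub_eq_zero]
  refine ⟨householder (u - v), householder_transpose _, ?_,
    householder_sub_mulVec (hu.trans hv.symm) h⟩
  rw [householder_transpose, householder_mul_self h]

theorem sq_dotProduct_le {n : Type*} [Fintype n] (u v : n → ℝ) :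
    (u ⬝ᵥ v) ^ 2 ≤ (u ⬝ᵥ u) * (v ⬝ᵥ v) := by
  simpa only [dotProduct, sq] using Finset.sum_mul_sq_le_sq_mul_sq Finset.univ u v

noncomputable def sgn (t : ℝ) : ℝ := if 0 ≤ t then 1 else -1

theorem mul_sgn_self (t : ℝ) : t * sgn t = |t| := by
  unfold sgn
  split_ifs with h
  · rw [mul_one, abs_of_nonneg h]
  · rw [mul_neg_one, abs_of_neg (not_le.mp h)]

theorem abs_sgn (t : ℝ) : |sgn t| = 1 := by
  unfold sgn
  split_ifs <;> simp

theorem measurable_sgn : Measurable sgn :=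
  Measurable.ite measurableSet_Ici measurable_const measurable_const

section Sphere

variable {n : Type*} [Fintype n] {σ : Measure (n → ℝ)}

theorem integral_comp_mulVec {U : Matrix n n ℝ} (hU : Measure.map U.mulVec σ = σ)
    {f : (n → ℝ) → ℝ} (hf : AEStronglyMeasurable f σ) :
    ∫ u, f (U *ᵥ u) ∂σ = ∫ u, f u ∂σ := by
  rw [← integral_map (by fun_prop : Continuous U.mulVec).aemeasurable (by rwa [hU]), hU]

theorem measurable_dotProduct_mul_sgn (v x : n → ℝ) :
    Measurable fun u : n → ℝ => (u ⬝ᵥ v) * sgn (u ⬝ᵥ x) :=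
  have (w : n → ℝ) : Measurable (· ⬝ᵥ w) := (continuous_id.dotProduct continuous_const).measurable
  (this v).mul (measurable_sgn.comp (this x))

theorem integrable_dotProduct_mul_sgn [IsFiniteMeasure σ] (hσ : ∀ᵐ u ∂σ, u ⬝ᵥ u = 1)
    (v x : n → ℝ) : Integrable (fun u => (u ⬝ᵥ v) * sgn (u ⬝ᵥ x)) σ := by
  refine .of_bound (measurable_dotProduct_mul_sgn v x).aestronglyMeasurable √(v ⬝ᵥ v) ?_
  filter_upwards [hσ] with u hu
  rw [norm_mul, Real.norm_eq_abs, Real.norm_eq_abs, abs_sgn, mul_one]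
  exact Real.abs_le_sqrt (by simpa [hu] using sq_dotProduct_le u v)

variable [DecidableEq n]

theorem integral_dotProduct_mul_sgn_eq_zero
    (hσinv : ∀ U : Matrix n n ℝ, Uᵀ * U = 1 → Measure.map U.mulVec σ = σ) {x z : n → ℝ}
    (hzx : z ⬝ᵥ x = 0) : ∫ u, (u ⬝ᵥ z) * sgn (u ⬝ᵥ x) ∂σ = 0 := by
  rcases eq_or_ne z 0 with rfl | hz
  · simp
  have hzz : z ⬝ᵥ z ≠ 0 := by rwa [Ne, dotProduct_self_eq_zero]
  have hH : (householder z)ᵀ * householder z = 1 := by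
    rw [householder_transpose, householder_mul_self hzz]
  have hflip (u : n → ℝ) : (householder z *ᵥ u ⬝ᵥ z) * sgn (householder z *ᵥ u ⬝ᵥ x)
      = -((u ⬝ᵥ z) * sgn (u ⬝ᵥ x)) := by
    rw [mulVec_dotProduct, mulVec_dotProduct, householder_transpose, householder_mulVec_self hzz,
      householder_mulVec_of_dotProduct_eq_zero hzx, dotProduct_neg, neg_mul]
  have := integral_comp_mulVec (hσinv _ hH) (measurable_dotProduct_mul_sgn z x).aestronglyMeasurable
  simp only [hflip, integral_neg] at this
  linarith

theorem integral_abs_dotProduct_eq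
    (hσinv : ∀ U : Matrix n n ℝ, Uᵀ * U = 1 → Measure.map U.mulVec σ = σ) {x w : n → ℝ}
    (hx : x ⬝ᵥ x = 1) (hw : w ⬝ᵥ w = 1) : ∫ u, |u ⬝ᵥ x| ∂σ = ∫ u, |u ⬝ᵥ w| ∂σ := by
  obtain ⟨V, hVsymm, hV, hVx⟩ := exists_symm_orthogonal_mulVec_eq hx hw
  have hmeas : Measurable fun u : n → ℝ => |u ⬝ᵥ x| :=
    (continuous_id.dotProduct continuous_const).abs.measurable
  rw [← integral_comp_mulVec (hσinv V hV) hmeas.aestronglyMeasurable]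
  simp only [mulVec_dotProduct, hVsymm, hVx]

theorem integral_dotProduct_mul_sgn [IsFiniteMeasure σ]
    (hσinv : ∀ U : Matrix n n ℝ, Uᵀ * U = 1 → Measure.map U.mulVec σ = σ)
    (hσ : ∀ᵐ u ∂σ, u ⬝ᵥ u = 1) {x : n → ℝ} (hx : x ⬝ᵥ x = 1) (y : n → ℝ) :
    ∫ u, (u ⬝ᵥ y) * sgn (u ⬝ᵥ x) ∂σ = (∫ u, |u ⬝ᵥ x| ∂σ) * (x ⬝ᵥ y) := by
  set z := y - (x ⬝ᵥ y) • x
  have hzx : z ⬝ᵥ x = 0 := by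
    rw [sub_dotProduct, smul_dotProduct, hx, dotProduct_comm, smul_eq_mul, mul_one, sub_self]
  have hsplit (u : n → ℝ) : (u ⬝ᵥ y) * sgn (u ⬝ᵥ x)
      = (x ⬝ᵥ y) * ((u ⬝ᵥ x) * sgn (u ⬝ᵥ x)) + (u ⬝ᵥ z) * sgn (u ⬝ᵥ x) := by
    rw [dotProduct_sub, dotProduct_smul, smul_eq_mul]
    ring
  simp only [hsplit]
  rw [integral_add ((integrable_dotProduct_mul_sgn hσ x x).const_mul _)
      (integrable_dotProduct_mul_sgn hσ z x), integral_dotProduct_mul_sgn_eq_zero hσinv hzx,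
    integral_const_mul]
  simp only [mul_sgn_self]
  ring

end Sphere

section Haar

variable {d : ℕ} {σ : Measure (Fin d → ℝ)} {ν : Measure (Matrix (Fin d) (Fin d) ℝ)}

theorem map_transpose_mulVec_eq_map_transpose_mulVec
    (hνinv : ∀ U : Matrix (Fin d) (Fin d) ℝ, Uᵀ * U = 1 → Measure.map (fun P => U * P) ν = ν)
    {u w : Fin d → ℝ} (hu : u ⬝ᵥ u = 1) (hw : w ⬝ᵥ w = 1) :
    Measure.map (fun P => Pᵀ *ᵥ w) ν = Measure.map (fun P => Pᵀ *ᵥ u) ν := by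
  obtain ⟨V, hVsymm, hV, hVu⟩ := exists_symm_orthogonal_mulVec_eq hu hw
  have hcomp : (fun P : Matrix (Fin d) (Fin d) ℝ => Pᵀ *ᵥ w) = (fun P => Pᵀ *ᵥ u) ∘ (V * ·) := by
    ext P : 1
    simp only [Function.comp_apply, transpose_mul, ← mulVec_mulVec, hVsymm, hVu]
  rw [hcomp, ← Measure.map_map (by fun_prop) (by fun_prop), hνinv V hV]

variable [IsProbabilityMeasure σ] [IsProbabilityMeasure ν]

theorem map_transpose_mulVec_eq (hσ : ∀ᵐ u ∂σ, u ⬝ᵥ u = 1)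
    (hσinv : ∀ U : Matrix (Fin d) (Fin d) ℝ, Uᵀ * U = 1 → Measure.map U.mulVec σ = σ)
    (hν : ∀ᵐ P ∂ν, Pᵀ * P = 1)
    (hνinv : ∀ U : Matrix (Fin d) (Fin d) ℝ, Uᵀ * U = 1 → Measure.map (fun P => U * P) ν = ν)
    {u : Fin d → ℝ} (hu : u ⬝ᵥ u = 1) : Measure.map (fun P => Pᵀ *ᵥ u) ν = σ := by
  ext A hA
  have hE : MeasurableSet {p : Matrix (Fin d) (Fin d) ℝ × (Fin d → ℝ) | p.1ᵀ *ᵥ p.2 ∈ A} :=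
    (by fun_prop : Measurable fun p : Matrix (Fin d) (Fin d) ℝ × (Fin d → ℝ) => p.1ᵀ *ᵥ p.2) hA
  have hP : (ν.prod σ) {p | p.1ᵀ *ᵥ p.2 ∈ A} = σ A := by
    rw [Measure.prod_apply hE, lintegral_congr_ae (g := fun _ => σ A), lintegral_const,
      measure_univ, mul_one]
    filter_upwards [hν] with P hP
    have hPt : Pᵀᵀ * Pᵀ = 1 := by rw [transpose_transpose, mul_eq_one_comm.mp hP]
    change σ (Pᵀ.mulVec ⁻¹' A) = σ A
    rw [← Measure.map_apply (by fun_prop) hA, hσinv Pᵀ hPt]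
  have hw : (ν.prod σ) {p | p.1ᵀ *ᵥ p.2 ∈ A} = Measure.map (fun P => Pᵀ *ᵥ u) ν A := by
    rw [Measure.prod_apply_symm hE,
      lintegral_congr_ae (g := fun _ => Measure.map (fun P => Pᵀ *ᵥ u) ν A), lintegral_const,
      measure_univ, mul_one]
    filter_upwards [hσ] with w hw
    rw [← map_transpose_mulVec_eq_map_transpose_mulVec hνinv hu hw,
      Measure.map_apply (by fun_prop) hA]
    rfl
  rw [← hw, hP]


theorem map_row_eq (hσ : ∀ᵐ u ∂σ, u ⬝ᵥ u = 1)
    (hσinv : ∀ U : Matrix (Fin d) (Fin d) ℝ, Uᵀ * U = 1 → Measure.map U.mulVec σ = σ)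
    (hν : ∀ᵐ P ∂ν, Pᵀ * P = 1)
    (hνinv : ∀ U : Matrix (Fin d) (Fin d) ℝ, Uᵀ * U = 1 → Measure.map (fun P => U * P) ν = ν)
    (i : Fin d) : Measure.map (fun P => P i) ν = σ := by
  have hrow : (fun P : Matrix (Fin d) (Fin d) ℝ => P i) = fun P => Pᵀ *ᵥ Pi.single i 1 := by
    ext P : 1
    rw [mulVec_single_one, col_transpose]
    rfl
  rw [hrow, map_transpose_mulVec_eq hσ hσinv hν hνinv (by simp)]

theorem integral_sum_comp_row (hσ : ∀ᵐ u ∂σ, u ⬝ᵥ u = 1)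
    (hσinv : ∀ U : Matrix (Fin d) (Fin d) ℝ, Uᵀ * U = 1 → Measure.map U.mulVec σ = σ)
    (hν : ∀ᵐ P ∂ν, Pᵀ * P = 1)
    (hνinv : ∀ U : Matrix (Fin d) (Fin d) ℝ, Uᵀ * U = 1 → Measure.map (fun P => U * P) ν = ν)
    {g : (Fin d → ℝ) → ℝ} (hg : Integrable g σ) :
    ∫ P, ∑ i, g (P i) ∂ν = d * ∫ u, g u ∂σ := by
  have hmap (i : Fin d) := map_row_eq hσ hσinv hν hνinv i
  have hrow (i : Fin d) : AEMeasurable (fun P : Matrix (Fin d) (Fin d) ℝ => P i) ν :=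
    (measurable_pi_apply i).aemeasurable
  rw [integral_finsetSum _ fun i _ => ?_]
  · simp_rw [← integral_map (hrow _) ((hmap _).symm ▸ hg.aestronglyMeasurable), hmap]
    simp
  · exact (integrable_map_measure ((hmap i).symm ▸ hg.aestronglyMeasurable) (hrow i)).mp
      ((hmap i).symm ▸ hg)

end Haar

/-- Let `d ≥ 2`, let `u` be distributed according to the uniform
probability measure `σ` on the unit sphere `S^{d-1}`, let `x ∈ ℝ^d` be a unit vector, and
`y ∈ ℝ^d` arbitrary.  Then
`E[⟨u, y⟩ · sign(⟨u, x⟩)] = E[|u_1|] · ⟨x, y⟩`.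
Consequently, for the 1-bit quantizer with reconstruction
`x̃ = √(2/(πd)) · Πᵀ · sign(Π x)` (`Π` Haar-random orthogonal, formalized via a probability
measure `ν` supported on orthogonal matrices and invariant under left multiplication by
orthogonal matrices), the estimator `⟨y, x̃⟩` has expectation
`√(2/(πd)) · d · E[|u_1|] · ⟨x, y⟩`, a multiplicatively biased estimate of `⟨x, y⟩`. -/
theorem statement_17 (d : ℕ) (hd : 2 ≤ d) (x y : Fin d → ℝ) (hx : ∑ i, x i ^ 2 = 1)
    (σ : Measure (Fin d → ℝ)) [IsProbabilityMeasure σ]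
    (hσsupp : σ {u : Fin d → ℝ | ∑ i, u i ^ 2 = 1}ᶜ = 0)
    (hσinv : ∀ U : Matrix (Fin d) (Fin d) ℝ, Uᵀ * U = 1 →
      Measure.map U.mulVec σ = σ)
    (ν : Measure (Matrix (Fin d) (Fin d) ℝ)) [IsProbabilityMeasure ν]
    (hνsupp : ν {P : Matrix (Fin d) (Fin d) ℝ | Pᵀ * P = 1}ᶜ = 0)
    (hνinv : ∀ U : Matrix (Fin d) (Fin d) ℝ, Uᵀ * U = 1 →
      Measure.map (fun P => U * P) ν = ν) :
    (∫ u, (∑ i, u i * y i) * (if 0 ≤ ∑ i, u i * x i then (1 : ℝ) else -1) ∂σ)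
      = (∫ u, |u ⟨0, by omega⟩| ∂σ) * ∑ i, x i * y i ∧
    (∫ P, ∑ j, y j * (Real.sqrt (2 / (π * d)) *
          Pᵀ.mulVec (fun i => if 0 ≤ P.mulVec x i then (1 : ℝ) else -1) j) ∂ν)
      = Real.sqrt (2 / (π * d)) * d * (∫ u, |u ⟨0, by omega⟩| ∂σ) *
          ∑ i, x i * y i := by
  have hx' : x ⬝ᵥ x = 1 := by simpa only [dotProduct, sq] using hx
  have hσ : ∀ᵐ u ∂σ, u ⬝ᵥ u = 1 := by
    rw [ae_iff]
    simpa only [dotProduct, sq, Set.compl_ofPred] using hσsupp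
  have hν : ∀ᵐ P ∂ν, Pᵀ * P = 1 := ae_iff.mpr hνsupp
  have hsign : ∫ u, (u ⬝ᵥ y) * sgn (u ⬝ᵥ x) ∂σ = (∫ u, |u ⟨0, by omega⟩| ∂σ) * (x ⬝ᵥ y) := by
    rw [integral_dotProduct_mul_sgn hσinv hσ hx',
      integral_abs_dotProduct_eq hσinv hx' (w := Pi.single ⟨0, by omega⟩ 1) (by simp)]
    simp only [dotProduct_single_one]
  refine ⟨hsign, ?_⟩
  have hestimator (P : Matrix (Fin d) (Fin d) ℝ) :
      ∑ j, y j * (√(2 / (π * d)) *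
          Pᵀ.mulVec (fun i => if 0 ≤ P.mulVec x i then (1 : ℝ) else -1) j)
        = √(2 / (π * d)) * ∑ i, (P i ⬝ᵥ y) * sgn (P i ⬝ᵥ x) := by
    change ∑ j, y j * (_ * (Pᵀ *ᵥ fun i => sgn (P i ⬝ᵥ x)) j) = _
    simp_rw [mul_left_comm (y _), ← Finset.mul_sum]
    exact congrArg _ ((dotProduct_transpose_mulVec P y _).trans (dotProduct_comm _ _))
  simp_rw [hestimator]
  rw [integral_const_mul,
    integral_sum_comp_row hσ hσinv hν hνinv (integrable_dotProduct_mul_sgn hσ y x), hsign,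
    dotProduct]
  ring
end
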